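/- arXiv:math/0508166 — 4 statements merged into one kernel-verified Lean document; each statement's English description precedes it below -/
import Mathlib

section
/- If the word problem of a finitely generated group G (with respect to some finite generating set containing all group elements appearing on edges of a given G-automaton) is a regular language, then the language accepted by any G-automaton over any finite alphabet is regular. -/
/-- A `G`-automaton over alphabet `α`: a finite directed graph with a start vertex,
accept vertices, and finitely many edges labeled by `(α ∪ {ε}) × G`. -/
structure GAutomaton (G : Type) [Group G] (α : Type) where
  Q : Type
  [fintypeQ : Fintype Q]
  start : Q
  accept : Set Q
  edges : List (Q × Option α × G × Q)

namespace GAutomaton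

variable {G : Type} [Group G] {α : Type}

/-- `Path M q w g q'` : there is a path from `q` to `q'` whose word label is `w`
and whose group label is `g`. -/
inductive Path (M : GAutomaton G α) : M.Q → List α → G → M.Q → Prop
  | nil (q : M.Q) : Path M q [] 1 q
  | cons {q q' q'' : M.Q} {x : Option α} {g h : G} {w : List α}
      (he : (q, x, g, q') ∈ M.edges) (hp : Path M q' w h q'') :
      Path M q (x.toList ++ w) (g * h) q''

/-- `M` accepts `w` when some start-to-accept path has word label `w` and group label `1`. -/
def Accepts (M : GAutomaton G α) (w : List α) : Prop :=
  ∃ q ∈ M.accept, M.Path M.start w 1 q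

/-- The language of a `G`-automaton. -/
def Lang (M : GAutomaton G α) : Language α := { w | M.Accepts w }

/-- A `G`-automaton is deterministic if it has no `ε`-edges and each state has
at most one outgoing edge per alphabet letter. -/
def Deterministic (M : GAutomaton G α) : Prop :=
  (∀ e ∈ M.edges, e.2.1 ≠ none) ∧
  ∀ e ∈ M.edges, ∀ e' ∈ M.edges, e.1 = e'.1 → e.2.1 = e'.2.1 → e = e'

end GAutomaton

/-- Evaluation of a letter of the alphabet `𝒢^{±1}` in the group. -/
def evalPM {G : Type} [Group G] {ι : Type} (f : ι → G) : ι × Bool → G :=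
  fun p => if p.2 then f p.1 else (f p.1)⁻¹


namespace εNFA

variable {α : Type*} {σ : Type*} (N : εNFA α σ)

/-- Path semantics for an εNFA. -/
inductive EPath : σ → List α → σ → Prop
  | nil (s : σ) : EPath s [] s
  | cons {s t u : σ} {x : Option α} {w : List α}
      (hs : t ∈ N.step s x) (hp : EPath t w u) : EPath s (x.toList ++ w) u

variable {N}

theorem EPath.trans {s t u : σ} {w w' : List α} (h : N.EPath s w t) (h' : N.EPath t w' u) :
    N.EPath s (w ++ w') u := by
  induction h with
  | nil => simpa using h'
  | cons hs _ ih => rw [List.append_assoc]; exact EPath.cons hs (ih h')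

theorem EPath.of_εClosure {T : Set σ} {u : σ} (h : u ∈ N.εClosure T) :
    ∃ t ∈ T, N.EPath t [] u := by
  induction h with
  | base s hs => exact ⟨s, hs, EPath.nil s⟩
  | step s t ht _ ih =>
      obtain ⟨r, hr, hp⟩ := ih
      exact ⟨r, hr, by simpa using hp.trans ((EPath.cons (x := none) ht (EPath.nil t)))⟩

theorem εClosure_stepSet (S : Set σ) (a : α) :
    N.εClosure (N.stepSet S a) = N.stepSet S a := by
  apply Set.Subset.antisymm _ (N.subset_εClosure _)
  intro u hu
  induction hu with
  | base s hs => exact hs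
  | step s t ht _ ih =>
      rw [mem_stepSet_iff] at ih ⊢
      obtain ⟨r, hr, hc⟩ := ih
      exact ⟨r, hr, εClosure.step _ _ ht hc⟩

theorem mem_evalFrom_of_EPath : ∀ {s u : σ} {w : List α} (_ : N.EPath s w u)
    {S : Set σ} (_ : s ∈ N.εClosure S), u ∈ N.evalFrom S w := by
  intro s u w h
  induction h with
  | nil => intro S hS; simpa using hS
  | @cons s t u x w hs _ ih =>
      intro S hS
      cases x with
      | none =>
          simpa using ih (εClosure.step s t hs hS)
      | some a =>
          have ht : t ∈ N.stepSet (N.εClosure S) a := by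
            rw [mem_stepSet_iff]
            exact ⟨s, hS, N.subset_εClosure _ hs⟩
          have := ih (S := N.stepSet (N.εClosure S) a) (by rw [εClosure_stepSet]; exact ht)
          simp only [Option.toList_some, List.cons_append, List.nil_append]
          rw [evalFrom] at this ⊢
          rw [εClosure_stepSet] at this
          simpa [List.foldl_cons] using this

theorem EPath_of_mem_evalFrom {S : Set σ} {u : σ} {w : List α} (h : u ∈ N.evalFrom S w) :
    ∃ s ∈ S, N.EPath s w u := by
  induction w using List.reverseRecOn generalizing u with
  | nil => exact EPath.of_εClosure (by simpa using h)
  | append_singleton x a ih =>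
      rw [evalFrom_append_singleton, mem_stepSet_iff] at h
      obtain ⟨t, ht, hc⟩ := h
      obtain ⟨s, hs, hp⟩ := ih ht
      obtain ⟨r, hr, hp'⟩ := EPath.of_εClosure hc
      have h1 : N.EPath t [a] u := by
        simpa using (EPath.cons (x := some a) hr (EPath.nil r)).trans hp'
      exact ⟨s, hs, by simpa using hp.trans h1⟩

end εNFA

section Aux
variable {G : Type} [Group G] {α : Type} (M : GAutomaton G α) {ι : Type} (f : ι → G)
  {σd : Type} (d : DFA (ι × Bool) σd)

/-- The simulating εNFA. -/
def theN : εNFA α (M.Q × σd) where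
  step := fun z x => { t | ∃ g, ∃ q', ∃ p : ι × Bool,
      (z.1, x, g, q') ∈ M.edges ∧ evalPM f p = g ∧ t = (q', d.step z.2 p) }
  start := {(M.start, d.start)}
  accept := {z | z.1 ∈ M.accept ∧ z.2 ∈ d.accept}

theorem claimA (hedges : ∀ e ∈ M.edges, ∃ p : ι × Bool, evalPM f p = e.2.2.1)
    {q : M.Q} {w : List α} {g : G} {q' : M.Q} (h : M.Path q w g q') (s : σd) :
    ∃ u : List (ι × Bool), (u.map (evalPM f)).prod = g ∧
      (theN M f d).EPath (q, s) w (q', d.evalFrom s u) := by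
  induction h generalizing s with
  | nil q => exact ⟨[], by simp, by exact εNFA.EPath.nil _⟩
  | @cons q q' q'' x gE h w he _ ih =>
      obtain ⟨p, hp⟩ := hedges _ he
      obtain ⟨u, hu, hP⟩ := ih (d.step s p)
      refine ⟨p :: u, by simp [hu, hp], ?_⟩
      refine εNFA.EPath.cons (t := (q', d.step s p)) ?_ (by simpa [DFA.evalFrom] using hP)
      exact ⟨gE, q', p, he, hp, rfl⟩

theorem claimB {z z' : M.Q × σd} {w : List α} (h : (theN M f d).EPath z w z') :
    ∃ g u, M.Path z.1 w g z'.1 ∧ (u.map (evalPM f)).prod = g ∧ z'.2 = d.evalFrom z.2 u := by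
  induction h with
  | nil s => exact ⟨1, [], GAutomaton.Path.nil _, by simp, by simp [DFA.evalFrom]⟩
  | @cons z t z' x w hs _ ih =>
      obtain ⟨gE, q', p, he, hp, rfl⟩ := hs
      obtain ⟨g, u, hP, hu, hev⟩ := ih
      exact ⟨gE * g, p :: u, GAutomaton.Path.cons he hP, by simp [hu, hp],
        by simpa [DFA.evalFrom] using hev⟩

end Aux
/-- If the word problem of `G` is regular then the language of any `G`-automaton is regular. -/
theorem stmt_1 (G : Type) [Group G] (ι : Type) [Fintype ι] (f : ι → G)
    (hgen : Subgroup.closure (Set.range f) = ⊤)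
    (hWP : Language.IsRegular { w : List (ι × Bool) | (w.map (evalPM f)).prod = 1 })
    (α : Type) [Fintype α] (M : GAutomaton G α)
    (hedges : ∀ e ∈ M.edges, ∃ p : ι × Bool, evalPM f p = e.2.2.1) :
    M.Lang.IsRegular := by
  obtain ⟨σd, instd, d, hd⟩ := hWP
  set N := theN M f d with hN
  have key : N.accepts = M.Lang := by
    ext w
    constructor
    · rintro ⟨z, hzacc, hz⟩
      obtain ⟨s, hs, hP⟩ := εNFA.EPath_of_mem_evalFrom hz
      obtain rfl : s = (M.start, d.start) := hs
      obtain ⟨g, u, hPath, hu, hev⟩ := claimB M f d hP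
      have : u ∈ d.accepts := by
        rw [DFA.mem_accepts]
        rw [DFA.eval, ← hev]
        exact hzacc.2
      rw [hd] at this
      have hg1 : g = 1 := by rw [← hu]; exact this
      exact ⟨z.1, hzacc.1, by rwa [hg1] at hPath⟩
    · rintro ⟨q, hq, hPath⟩
      obtain ⟨u, hu, hP⟩ := claimA M f d hedges hPath d.start
      refine ⟨(q, d.evalFrom d.start u), ⟨hq, ?_⟩, ?_⟩
      · have : u ∈ ({ w : List (ι × Bool) | (w.map (evalPM f)).prod = 1 } : Language (ι × Bool)) :=
          hu
        rw [← hd] at this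
        exact (DFA.mem_accepts d).1 this
      · exact εNFA.mem_evalFrom_of_EPath hP (N.subset_εClosure _ rfl)
  haveI := M.fintypeQ
  haveI : Fintype (Set (M.Q × σd)) := Fintype.ofFinite _
  exact ⟨Set (M.Q × σd), inferInstance, N.toNFA.toDFA,
    by rw [NFA.toDFA_correct, εNFA.toNFA_correct, key]⟩
end

section
/- If the word problem of a finitely generated group G is a context-free language, then the language accepted by any G-automaton is context-free. -/
namespace CFAux

set_option linter.unusedSectionVars false

open ContextFreeGrammar

section generic

variable {T : Type*} {g : ContextFreeGrammar T}

lemma rewrites_terminals {r : ContextFreeRule T g.NT} {x : List T} {v : List (Symbol T g.NT)}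
    (h : r.Rewrites (x.map Symbol.terminal) v) : False := by
  obtain ⟨p, q, hu, -⟩ := h.exists_parts
  have : Symbol.nonterminal r.input ∈ List.map (Symbol.terminal : T → Symbol T g.NT) x := by
    rw [hu]; simp
  simp [List.mem_map] at this

lemma rewrites_singleton {r : ContextFreeRule T g.NT} {A : g.NT} {v : List (Symbol T g.NT)}
    (h : r.Rewrites [Symbol.nonterminal A] v) : r.input = A ∧ v = r.output := by
  cases h with
  | head => exact ⟨rfl, by simp⟩
  | cons _ hrs => exact absurd hrs (by intro h; nomatch h)

lemma rewrites_append_split {r : ContextFreeRule T g.NT} {v₁ v₂ v' : List (Symbol T g.NT)}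
    (h : r.Rewrites (v₁ ++ v₂) v') :
    (∃ w₁, r.Rewrites v₁ w₁ ∧ v' = w₁ ++ v₂) ∨ (∃ w₂, r.Rewrites v₂ w₂ ∧ v' = v₁ ++ w₂) := by
  induction v₁ generalizing v' with
  | nil => exact Or.inr ⟨v', by simpa using h⟩
  | cons s t ih =>
    rw [List.cons_append] at h
    cases h with
    | head => exact Or.inl ⟨r.output ++ t, ContextFreeRule.Rewrites.head t, by simp⟩
    | cons _ hrs =>
      rcases ih hrs with ⟨w₁, hw₁, rfl⟩ | ⟨w₂, hw₂, rfl⟩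
      · exact Or.inl ⟨s :: w₁, ContextFreeRule.Rewrites.cons s hw₁, by simp⟩
      · exact Or.inr ⟨w₂, hw₂, by simp⟩

/-- Derivation in exactly `n` steps. -/
inductive DerIn (g : ContextFreeGrammar T) : ℕ → List (Symbol T g.NT) → List (Symbol T g.NT) → Prop
  | refl (u) : DerIn g 0 u u
  | head {n u v w} : g.Produces u v → DerIn g n v w → DerIn g (n + 1) u w

lemma derIn_derives {n : ℕ} {u v : List (Symbol T g.NT)} (h : DerIn g n u v) : g.Derives u v := by
  induction h with
  | refl => rfl
  | head hp _ ih => exact hp.trans_derives ih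

lemma derives_derIn {u v : List (Symbol T g.NT)} (h : g.Derives u v) : ∃ n, DerIn g n u v := by
  induction h using Relation.ReflTransGen.head_induction_on with
  | refl => exact ⟨0, DerIn.refl v⟩
  | head hp _ ih => obtain ⟨n, hn⟩ := ih; exact ⟨n + 1, DerIn.head hp hn⟩

lemma derIn_zero {u v : List (Symbol T g.NT)} (h : DerIn g 0 u v) : u = v := by
  cases h; rfl

lemma derIn_terminals {n : ℕ} {x : List T} {v : List (Symbol T g.NT)}
    (h : DerIn g n (x.map Symbol.terminal) v) : v = x.map Symbol.terminal := by
  cases h with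
  | refl => rfl
  | head hp _ => obtain ⟨r, -, hr⟩ := hp; exact absurd hr rewrites_terminals

lemma derIn_append_split {n : ℕ} {v₁ v₂ : List (Symbol T g.NT)} {u : List T}
    (h : DerIn g n (v₁ ++ v₂) (u.map Symbol.terminal)) :
    ∃ n₁ n₂ u₁ u₂, n₁ + n₂ = n ∧ u = u₁ ++ u₂ ∧
      DerIn g n₁ v₁ (u₁.map Symbol.terminal) ∧ DerIn g n₂ v₂ (u₂.map Symbol.terminal) := by
  induction n generalizing v₁ v₂ with
  | zero =>
    obtain ⟨u₁, u₂, rfl, h₁, h₂⟩ := List.map_eq_append_iff.mp (derIn_zero h).symm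
    exact ⟨0, 0, u₁, u₂, rfl, rfl, h₁ ▸ DerIn.refl v₁, h₂ ▸ DerIn.refl v₂⟩
  | succ n ih =>
    cases h with
    | head hp hd =>
      obtain ⟨r, hr, hrw⟩ := hp
      rcases rewrites_append_split hrw with ⟨w₁, hw₁, rfl⟩ | ⟨w₂, hw₂, rfl⟩
      · obtain ⟨n₁, n₂, u₁, u₂, hn, hu, h₁, h₂⟩ := ih hd
        exact ⟨n₁ + 1, n₂, u₁, u₂, by omega, hu, DerIn.head ⟨r, hr, hw₁⟩ h₁, h₂⟩
      · obtain ⟨n₁, n₂, u₁, u₂, hn, hu, h₁, h₂⟩ := ih hd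
        exact ⟨n₁, n₂ + 1, u₁, u₂, by omega, hu, h₁, DerIn.head ⟨r, hr, hw₂⟩ h₂⟩


lemma derives_append {T : Type*} {g : ContextFreeGrammar T} {x x' y y' : List (Symbol T g.NT)}
    (hx : g.Derives x x') (hy : g.Derives y y') : g.Derives (x ++ y) (x' ++ y') :=
  (hx.append_right y).trans (hy.append_left x')

end generic

variable {G : Type} [Group G] {ι : Type} (f : ι → G) {α : Type} (M : GAutomaton G α)

attribute [local instance] GAutomaton.fintypeQ

/-- Path in `M` whose edges' group labels are pointwise given by letters. -/
inductive EPath : M.Q → List (ι × Bool) → M.Q → List α → Prop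
  | nil (q : M.Q) : EPath q [] q []
  | cons {q q' q'' : M.Q} {x : Option α} {p : ι × Bool} {u : List (ι × Bool)} {w : List α}
      (he : (q, x, evalPM f p, q') ∈ M.edges) (hp : EPath q' u q'' w) :
      EPath q (p :: u) q'' (x.toList ++ w)

lemma EPath.toPath {q q' : M.Q} {u : List (ι × Bool)} {w : List α}
    (h : EPath f M q u q' w) : M.Path q w ((u.map (evalPM f)).prod) q' := by
  induction h with
  | nil q => simpa using GAutomaton.Path.nil q
  | cons he _ ih => simpa using GAutomaton.Path.cons he ih

lemma Path.toEPath (hedges : ∀ e ∈ M.edges, ∃ p : ι × Bool, evalPM f p = e.2.2.1)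
    {q q' : M.Q} {gv : G} {w : List α} (h : M.Path q w gv q') :
    ∃ u, EPath f M q u q' w ∧ (u.map (evalPM f)).prod = gv := by
  induction h with
  | nil q => exact ⟨[], EPath.nil q, by simp⟩
  | cons he _ ih =>
    obtain ⟨p, hp⟩ := hedges _ he
    obtain ⟨u, hu, hprod⟩ := ih
    exact ⟨p :: u, EPath.cons (by rwa [hp]) hu, by simp [hprod, hp]⟩

lemma EPath.append {q qm q' : M.Q} {u₁ u₂ : List (ι × Bool)} {w₁ w₂ : List α}
    (h₁ : EPath f M q u₁ qm w₁) (h₂ : EPath f M qm u₂ q' w₂) :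
    EPath f M q (u₁ ++ u₂) q' (w₁ ++ w₂) := by
  induction h₁ with
  | nil => simpa using h₂
  | cons he _ ih => simpa using EPath.cons he (ih h₂)

lemma EPath.nil_inv {q q' : M.Q} {w : List α} (h : EPath f M q [] q' w) : q' = q ∧ w = [] := by
  cases h; exact ⟨rfl, rfl⟩

lemma EPath.append_split {q q' : M.Q} {u₁ u₂ : List (ι × Bool)} {w : List α}
    (h : EPath f M q (u₁ ++ u₂) q' w) :
    ∃ qm w₁ w₂, w = w₁ ++ w₂ ∧ EPath f M q u₁ qm w₁ ∧ EPath f M qm u₂ q' w₂ := by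
  induction u₁ generalizing q w with
  | nil => exact ⟨q, [], w, rfl, EPath.nil q, h⟩
  | cons p t ih =>
    cases h with
    | cons he hp =>
      obtain ⟨qm, w₁, w₂, rfl, hA, hB⟩ := ih hp
      exact ⟨qm, _ ++ w₁, w₂, by simp, EPath.cons he hA, hB⟩

lemma EPath.single_inv {q q' : M.Q} {p : ι × Bool} {w : List α} (h : EPath f M q [p] q' w) :
    ∃ x, (q, x, evalPM f p, q') ∈ M.edges ∧ w = x.toList := by
  cases h with
  | cons he hp =>
    obtain ⟨rfl, rfl⟩ := EPath.nil_inv f M hp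
    exact ⟨_, he, by simp⟩

variable (g : ContextFreeGrammar.{0} (ι × Bool))

/-- Nonterminals of the simulating grammar. -/
def NTt : Type := Unit ⊕ M.Q × (g.NT ⊕ (ι × Bool)) × M.Q

/-- Embedding a grammar symbol between two states. -/
def sym : M.Q → Symbol (ι × Bool) g.NT → M.Q → Symbol α (NTt M g)
  | q, .terminal p, q' => .nonterminal (.inr (q, .inr p, q'))
  | q, .nonterminal A, q' => .nonterminal (.inr (q, .inl A, q'))

def lastSt : M.Q → List M.Q → M.Q
  | q, [] => q
  | _, q' :: qs => lastSt q' qs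

def embedF : M.Q → List (Symbol (ι × Bool) g.NT) → List M.Q → List (Symbol α (NTt M g))
  | _, [], _ => []
  | _, _ :: _, [] => []
  | q, s :: v, q' :: qs => sym M g q s q' :: embedF q' v qs

def startRule (qf : M.Q) : ContextFreeRule α (NTt M g) :=
  ⟨.inl (), [.nonterminal (.inr (M.start, .inl g.initial, qf))]⟩

def liftRule (r : ContextFreeRule (ι × Bool) g.NT) (q : M.Q) (qs : List M.Q) :
    ContextFreeRule α (NTt M g) :=
  ⟨.inr (q, .inl r.input, lastSt M q qs), embedF M g q r.output qs⟩

def edgeRule (e : M.Q × Option α × G × M.Q) (p : ι × Bool) : ContextFreeRule α (NTt M g) :=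
  ⟨.inr (e.1, .inr p, e.2.2.2), e.2.1.toList.map Symbol.terminal⟩

def ruleSet : Set (ContextFreeRule α (NTt M g)) :=
  {r' | ∃ qf ∈ M.accept, r' = startRule M g qf} ∪
  {r' | ∃ r ∈ g.rules, ∃ q : M.Q, ∃ qs : List M.Q,
      qs.length = r.output.length ∧ r' = liftRule M g r q qs} ∪
  {r' | ∃ e ∈ M.edges, ∃ p : ι × Bool, evalPM f p = e.2.2.1 ∧ r' = edgeRule M g e p}

lemma ruleSet_finite [Fintype ι] : (ruleSet f M g).Finite := by
  refine (Set.Finite.union ?_ ?_).union ?_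
  · apply Set.Finite.subset ((Set.toFinite M.accept).image (startRule M g))
    rintro r' ⟨qf, hqf, rfl⟩
    exact ⟨qf, hqf, rfl⟩
  · have hfin : ∀ n : ℕ, {x : M.Q × List M.Q | x.2.length = n}.Finite := by
      intro n
      apply Set.Finite.subset (Set.finite_univ.prod (List.finite_length_eq M.Q n))
      intro x hx
      exact ⟨trivial, hx⟩
    apply Set.Finite.subset <| Set.Finite.biUnion g.rules.finite_toSet fun r _ =>
      (hfin r.output.length).image (fun x => liftRule M g r x.1 x.2)
    rintro r' ⟨r, hr, q, qs, hlen, rfl⟩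
    exact Set.mem_biUnion hr ⟨(q, qs), hlen, rfl⟩
  · apply Set.Finite.subset <| Set.Finite.image
      (fun x : _ × (ι × Bool) => edgeRule M g x.1 x.2) (M.edges.finite_toSet.prod (Set.finite_univ))
    rintro r' ⟨e, he, p, hp, rfl⟩
    exact ⟨(e, p), ⟨he, trivial⟩, rfl⟩

/-- The grammar simulating `M` over the word-problem grammar `g`. -/
noncomputable def simG [Fintype ι] : ContextFreeGrammar α :=
  ⟨NTt M g, .inl (), (ruleSet_finite f M g).toFinset⟩

variable [Fintype ι]

lemma mem_simG_rules {r' : ContextFreeRule α (NTt M g)} :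
    r' ∈ (simG f M g).rules ↔ r' ∈ ruleSet f M g :=
  Set.Finite.mem_toFinset _


lemma main_backward (n : ℕ) :
    ∀ (v : List (Symbol (ι × Bool) g.NT)) (u : List (ι × Bool)) (q q' : M.Q) (w : List α),
      DerIn g n v (u.map Symbol.terminal) → EPath f M q u q' w →
      ∃ qs, qs.length = v.length ∧ lastSt M q qs = q' ∧
        (simG f M g).Derives (embedF M g q v qs) (w.map Symbol.terminal) := by
  induction n using Nat.strong_induction_on with
  | _ n ih =>
  intro v
  induction v with
  | nil =>
    intro u q q' w hd hp
    have hu : u.map (Symbol.terminal (N := g.NT)) = [] := by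
      simpa using derIn_terminals (x := ([] : List (ι × Bool))) hd
    rw [List.map_eq_nil_iff] at hu
    subst hu
    obtain ⟨rfl, rfl⟩ := EPath.nil_inv f M hp
    exact ⟨[], rfl, rfl, by exact Derives.refl []⟩
  | cons s v' ihv =>
    intro u q q' w hd hp
    rw [show s :: v' = [s] ++ v' from rfl] at hd
    obtain ⟨n₁, n₂, u₁, u₂, hn, rfl, hd₁, hd₂⟩ := derIn_append_split hd
    obtain ⟨qm, w₁, w₂, rfl, hp₁, hp₂⟩ := EPath.append_split f M hp
    -- tail
    obtain ⟨qs', hlen', hlast', hder'⟩ :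
        ∃ qs, qs.length = v'.length ∧ lastSt M qm qs = q' ∧
          (simG f M g).Derives (embedF M g qm v' qs) (w₂.map Symbol.terminal) := by
      rcases eq_or_lt_of_le (show n₂ ≤ n by omega) with rfl | hlt
      · exact ihv u₂ qm q' w₂ hd₂ hp₂
      · exact ih n₂ hlt v' u₂ qm q' w₂ hd₂ hp₂
    -- head
    have hhead : (simG f M g).Derives [sym M g q s qm] (w₁.map Symbol.terminal) := by
      cases s with
      | terminal p =>
        have hu₁ : u₁ = [p] := by
          have h2 : u₁.map (Symbol.terminal (N := g.NT)) = [p].map Symbol.terminal :=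
            derIn_terminals (x := [p]) hd₁
          exact List.map_injective_iff.mpr (fun a b hab => Symbol.terminal.inj hab) h2
        subst hu₁
        obtain ⟨x, he, rfl⟩ := EPath.single_inv f M hp₁
        refine Produces.single ⟨edgeRule M g (q, x, evalPM f p, qm) p, ?_, ?_⟩
        · exact (mem_simG_rules f M g).mpr (Or.inr ⟨_, he, p, rfl, rfl⟩)
        · exact ContextFreeRule.Rewrites.input_output
      | nonterminal A =>
        match n₁, hd₁ with
        | 0, hd₁ =>
          exfalso
          have := derIn_zero hd₁
          cases u₁ <;> simp [List.map_cons] at this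
        | (k+1), DerIn.head hprod hder =>
          obtain ⟨r, hr, hrw⟩ := hprod
          obtain ⟨hinput, rfl⟩ := rewrites_singleton hrw
          obtain ⟨qs₁, hlen₁, hlast₁, hder₁⟩ :=
            ih k (by omega) r.output u₁ q qm w₁ hder hp₁
          refine Produces.trans_derives ⟨liftRule M g r q qs₁, ?_, ?_⟩ hder₁
          · exact (mem_simG_rules f M g).mpr (Or.inl (Or.inr ⟨r, hr, q, qs₁, hlen₁, rfl⟩))
          · have : [sym M g q (Symbol.nonterminal A) qm] =
                [Symbol.nonterminal (liftRule M g r q qs₁).input] := by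
              simp [sym, liftRule, hinput, hlast₁]
            erw [this]
            exact ContextFreeRule.Rewrites.input_output
    refine ⟨qm :: qs', by simp [hlen'], by simpa [lastSt] using hlast', ?_⟩
    show (simG f M g).Derives ([sym M g q s qm] ++ embedF M g qm v' qs') _
    rw [List.map_append]
    exact derives_append hhead hder'


/-! ### Soundness -/

/-- Semantics of a symbol of the simulating grammar. -/
def Sem : Symbol α (NTt M g) → List α → Prop
  | .terminal a, w => w = [a]
  | .nonterminal (.inl _), w => M.Accepts w
  | .nonterminal (.inr (q, .inl A, q')), w =>
      ∃ u, g.Derives [Symbol.nonterminal A] (u.map Symbol.terminal) ∧ EPath f M q u q' w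
  | .nonterminal (.inr (q, .inr p, q')), w => EPath f M q [p] q' w

inductive SemS : List (Symbol α (NTt M g)) → List α → Prop
  | nil : SemS [] []
  | cons {s : Symbol α (NTt M g)} {w₁ : List α} {V : List (Symbol α (NTt M g))} {w₂ : List α} :
      Sem f M g s w₁ → SemS V w₂ → SemS (s :: V) (w₁ ++ w₂)

lemma SemS.nil_inv {w : List α} (h : SemS f M g [] w) : w = [] := by cases h; rfl

lemma SemS.append {X Y : List (Symbol α (NTt M g))} {w₁ w₂ : List α}
    (h₁ : SemS f M g X w₁) (h₂ : SemS f M g Y w₂) : SemS f M g (X ++ Y) (w₁ ++ w₂) := by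
  induction h₁ with
  | nil => simpa using h₂
  | cons hs _ ih => simpa [List.append_assoc] using SemS.cons hs ih

lemma SemS.append_split {X Y : List (Symbol α (NTt M g))} {w : List α}
    (h : SemS f M g (X ++ Y) w) :
    ∃ w₁ w₂, w = w₁ ++ w₂ ∧ SemS f M g X w₁ ∧ SemS f M g Y w₂ := by
  induction X generalizing w with
  | nil => exact ⟨[], w, rfl, SemS.nil, h⟩
  | cons s X' ih =>
    cases h with
    | cons hs ht =>
      obtain ⟨wa, wb, rfl, hA, hB⟩ := ih ht
      exact ⟨_ ++ wa, wb, by simp, SemS.cons hs hA, hB⟩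

lemma SemS.terminals (w : List α) : SemS f M g (w.map Symbol.terminal) w := by
  induction w with
  | nil => exact SemS.nil
  | cons a t ih => exact SemS.cons (s := Symbol.terminal a) (w₁ := [a]) rfl ih

lemma SemS.terminals_inv {v w : List α} (h : SemS f M g (v.map Symbol.terminal) w) : w = v := by
  induction v generalizing w with
  | nil => exact SemS.nil_inv f M g h
  | cons a t ih =>
    cases h with
    | cons hs ht =>
      have h1 : _ = [a] := hs
      rw [h1, ih ht]
      rfl

lemma SemS.singleton_inv {s : Symbol α (NTt M g)} {w : List α} (h : SemS f M g [s] w) :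
    Sem f M g s w := by
  cases h with
  | cons hs ht => rw [SemS.nil_inv f M g ht, List.append_nil]; exact hs

lemma embedF_sem {v : List (Symbol (ι × Bool) g.NT)} :
    ∀ (qs : List M.Q) (q : M.Q) (w : List α), qs.length = v.length →
      SemS f M g (embedF M g q v qs) w →
      ∃ u, g.Derives v (u.map Symbol.terminal) ∧ EPath f M q u (lastSt M q qs) w := by
  induction v with
  | nil =>
    intro qs q w hlen h
    have hqs : qs = [] := by simpa using hlen
    subst hqs
    rw [SemS.nil_inv f M g h]
    exact ⟨[], by exact Derives.refl [], EPath.nil q⟩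
  | cons s v' ih =>
    rintro (_ | ⟨qm, qs'⟩) q w hlen h
    · simp at hlen
    · simp only [List.length_cons, Nat.succ.injEq] at hlen
      cases h with
      | cons hs ht =>
        rename_i w₁ w₂
        obtain ⟨u₂, hd₂, hp₂⟩ := ih qs' qm w₂ hlen ht
        have : ∃ u₁, g.Derives [s] (u₁.map Symbol.terminal) ∧ EPath f M q u₁ qm w₁ := by
          cases s with
          | terminal p => exact ⟨[p], by exact Derives.refl _, hs⟩
          | nonterminal A => exact hs
        obtain ⟨u₁, hd₁, hp₁⟩ := this
        refine ⟨u₁ ++ u₂, ?_, ?_⟩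
        · rw [List.map_append]
          exact derives_append (g := g) hd₁ hd₂
        · exact EPath.append f M hp₁ hp₂

lemma sem_of_rule {r' : ContextFreeRule α (NTt M g)} (hr' : r' ∈ ruleSet f M g)
    {w : List α} (h : SemS f M g r'.output w)
    (hg : g.language = { w : List (ι × Bool) | (w.map (evalPM f)).prod = 1 }) :
    Sem f M g (Symbol.nonterminal r'.input) w := by
  rcases hr' with (⟨qf, hqf, rfl⟩ | ⟨r, hr, q, qs, hlen, rfl⟩) | ⟨e, he, p, hp, rfl⟩
  · -- start rule
    have hsem := SemS.singleton_inv f M g h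
    obtain ⟨u, hd, hep⟩ := hsem
    have hu : u ∈ g.language := hd
    rw [hg] at hu
    have hpath := EPath.toPath f M hep
    rw [hu] at hpath
    exact ⟨qf, hqf, hpath⟩
  · -- lift rule
    obtain ⟨u, hd, hep⟩ := embedF_sem f M g qs q w hlen h
    exact ⟨u, Produces.trans_derives ⟨r, hr, ContextFreeRule.Rewrites.input_output⟩ hd, hep⟩
  · -- edge rule
    have hw : w = e.2.1.toList := SemS.terminals_inv f M g h
    show EPath f M e.1 [p] e.2.2.2 w
    rw [hw, show e.2.1.toList = e.2.1.toList ++ [] by simp]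
    exact EPath.cons (x := e.2.1) (by rw [hp]; exact he) (EPath.nil _)

lemma semS_backward_step {U V : List (Symbol α (NTt M g))} {w : List α}
    (hg : g.language = { w : List (ι × Bool) | (w.map (evalPM f)).prod = 1 })
    (hUV : (simG f M g).Produces U V) (h : SemS f M g V w) : SemS f M g U w := by
  obtain ⟨r', hr', hrw⟩ := hUV
  obtain ⟨P, S, rfl, rfl⟩ := hrw.exists_parts
  erw [mem_simG_rules] at hr'
  rw [List.append_assoc] at h
  obtain ⟨wP, wRest, rfl, hP, hRest⟩ := SemS.append_split f M g h
  obtain ⟨w0, wS, rfl, h0, hS⟩ := SemS.append_split f M g hRest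
  have hmid : SemS f M g ([Symbol.nonterminal r'.input] ++ S) (w0 ++ wS) :=
    SemS.cons (sem_of_rule f M g hr' h0 hg) hS
  rw [List.append_assoc]
  exact SemS.append f M g hP hmid


lemma semS_backward {U : List (Symbol α (NTt M g))} {w : List α}
    (hg : g.language = { w : List (ι × Bool) | (w.map (evalPM f)).prod = 1 })
    (h : (simG f M g).Derives U (w.map Symbol.terminal)) : SemS f M g U w := by
  induction h using Relation.ReflTransGen.head_induction_on with
  | refl => exact SemS.terminals f M g w
  | head hstep _ ih => exact semS_backward_step f M g hg hstep ih

lemma simG_lang (hedges : ∀ e ∈ M.edges, ∃ p : ι × Bool, evalPM f p = e.2.2.1)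
    (hg : g.language = { w : List (ι × Bool) | (w.map (evalPM f)).prod = 1 }) :
    (simG f M g).language = M.Lang := by
  ext w
  constructor
  · intro hw
    have h := semS_backward f M g hg hw
    exact SemS.singleton_inv f M g h
  · rintro ⟨qf, hqf, hpath⟩
    obtain ⟨u, hep, hprod⟩ := Path.toEPath f M hedges hpath
    have hu : u ∈ g.language := by rw [hg]; exact hprod
    have hd : g.Derives [Symbol.nonterminal g.initial] (u.map Symbol.terminal) := hu
    obtain ⟨n, hn⟩ := derives_derIn hd
    obtain ⟨qs, hlen, hlast, hder⟩ :=
      main_backward f M g n [Symbol.nonterminal g.initial] u M.start qf w hn hep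
    match qs, hlen with
    | [x], _ =>
      have hx : x = qf := hlast
      subst hx
      refine Produces.trans_derives ⟨startRule M g x, ?_, ?_⟩ hder
      · exact (mem_simG_rules f M g).mpr (Or.inl (Or.inl ⟨x, hqf, rfl⟩))
      · have : embedF M g M.start [Symbol.nonterminal g.initial] [x] =
            (startRule M g x).output := rfl
        rw [this]
        exact ContextFreeRule.Rewrites.input_output

end CFAux

/-- If the word problem of `G` is context-free then the language of any `G`-automaton
is context-free. -/
theorem stmt_2 (G : Type) [Group G] (ι : Type) [Fintype ι] (f : ι → G)
    (hgen : Subgroup.closure (Set.range f) = ⊤)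
    (hWP : Language.IsContextFree { w : List (ι × Bool) | (w.map (evalPM f)).prod = 1 })
    (α : Type) [Fintype α] (M : GAutomaton G α)
    (hedges : ∀ e ∈ M.edges, ∃ p : ι × Bool, evalPM f p = e.2.2.1) :
    M.Lang.IsContextFree := by
  classical
  obtain ⟨g, hg⟩ := hWP
  exact ⟨CFAux.simG f M g, CFAux.simG_lang f M g hedges hg⟩
end

section
/- A language L over an alphabet Σ is accepted by some G-automaton if and only if L is the image under a monoid homomorphism (induced by a finite-state transduction) of the intersection of a regular language with the word problem of G; more precisely, if L is accepted by a G-automaton then there exist a finite generating set 𝒢 of the subgroup generated by the edge labels, a regular language R over the product alphabet (Σ ∪ {ε}) × 𝒢, and projections π₁, π₂ such that L = π₁(R ∩ π₂⁻¹(WP(G,𝒢))). -/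
/-- The language of a `G`-automaton is the projection of the intersection of a regular
language with the word problem of the subgroup generated by the edge labels. -/
theorem stmt_3 (G : Type) [Group G] (α : Type) [Fintype α] (M : GAutomaton G α) :
    ∃ (ι : Type) (_ : Fintype ι) (f : ι → G),
      Subgroup.closure (Set.range f)
          = Subgroup.closure { g : G | ∃ e ∈ M.edges, e.2.2.1 = g } ∧
      ∃ R : Language (Option α × ι), R.IsRegular ∧
        M.Lang = (fun w : List (Option α × ι) => (w.map Prod.fst).reduceOption) ''
          { w | w ∈ R ∧ ((w.map Prod.snd).map f).prod = 1 } := by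
  classical
  haveI := M.fintypeQ
  refine ⟨Fin M.edges.length, inferInstance, fun i => (M.edges.get i).2.2.1, ?_, ?_⟩
  · congr 1
    ext g
    simp only [Set.mem_range, Set.mem_setOf_eq]
    constructor
    · rintro ⟨i, rfl⟩
      exact ⟨M.edges.get i, M.edges.get_mem _, rfl⟩
    · rintro ⟨e, he, rfl⟩
      obtain ⟨i, hi⟩ := List.mem_iff_get.mp he
      exact ⟨i, by rw [hi]⟩
  · set f : Fin M.edges.length → G := fun i => (M.edges.get i).2.2.1 with hf
    let step : Option M.Q → Option α × Fin M.edges.length → Option M.Q :=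
      fun s p => match s with
        | none => none
        | some q => if (M.edges.get p.2).1 = q ∧ (M.edges.get p.2).2.1 = p.1
            then some (M.edges.get p.2).2.2.2 else none
    let dfa : DFA (Option α × Fin M.edges.length) (Option M.Q) :=
      ⟨step, some M.start, {s | ∃ q ∈ M.accept, s = some q}⟩
    refine ⟨dfa.accepts, ⟨Option M.Q, inferInstance, dfa, rfl⟩, ?_⟩
    have redcons : ∀ (x : Option α) (l : List (Option α)),
        (x :: l).reduceOption = x.toList ++ l.reduceOption := by
      intro x l; cases x <;> simp [List.reduceOption_cons_of_some]
    have ev_none : ∀ l : List (Option α × Fin M.edges.length),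
        dfa.evalFrom none l = none := by
      intro l
      induction l with
      | nil => rfl
      | cons a l ih =>
        show dfa.evalFrom (dfa.step none a) l = none
        exact ih
    have fwd : ∀ (l : List (Option α × Fin M.edges.length)) (q q' : M.Q),
        dfa.evalFrom (some q) l = some q' →
        M.Path q ((l.map Prod.fst).reduceOption) (((l.map Prod.snd).map f).prod) q' := by
      intro l
      induction l with
      | nil =>
        intro q q' h
        cases Option.some.inj h
        simpa using GAutomaton.Path.nil (M := M) q
      | cons a l ih =>
        intro q q' h
        have h' : dfa.evalFrom (dfa.step (some q) a) l = some q' := h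
        by_cases hc : (M.edges.get a.2).1 = q ∧ (M.edges.get a.2).2.1 = a.1
        · have hs : dfa.step (some q) a = some (M.edges.get a.2).2.2.2 := by
            simp only [dfa, step, hc, and_self, if_true]
          rw [hs] at h'
          have hp := ih _ _ h'
          have he : (q, a.1, (M.edges.get a.2).2.2.1, (M.edges.get a.2).2.2.2) ∈ M.edges := by
            have := M.edges.get_mem a.2
            rw [← hc.1, ← hc.2]
            simpa using M.edges.get_mem a.2
          have := GAutomaton.Path.cons he hp
          simpa [redcons, List.map_cons, List.prod_cons, hf] using this
        · have hs : dfa.step (some q) a = none := by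
            simp only [dfa, step, hc, if_false]
          rw [hs, ev_none] at h'
          cases h'
    have bwd : ∀ {q : M.Q} {w : List α} {g : G} {q' : M.Q}, M.Path q w g q' →
        ∃ l : List (Option α × Fin M.edges.length),
          dfa.evalFrom (some q) l = some q' ∧
          (l.map Prod.fst).reduceOption = w ∧ ((l.map Prod.snd).map f).prod = g := by
      intro q w g q' hp
      induction hp with
      | nil q => exact ⟨[], rfl, rfl, rfl⟩
      | @cons q q' q'' x g h w he hp ih =>
        obtain ⟨l, hev, hw, hg⟩ := ih
        obtain ⟨i, hi⟩ := List.mem_iff_get.mp he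
        refine ⟨(x, i) :: l, ?_, ?_, ?_⟩
        · show dfa.evalFrom (dfa.step (some q) (x, i)) l = some q''
          have hs : dfa.step (some q) (x, i) = some q' := by
            simp only [dfa, step, hi, if_true, and_self]
          rw [hs]; exact hev
        · simp [redcons, hw]
        · show ((((x, i) :: l).map Prod.snd).map f).prod = g * h
          rw [List.map_cons, List.map_cons, List.prod_cons, hg]
          have hfi : f i = g := by show (M.edges.get i).2.2.1 = g; rw [hi]
          rw [hfi]
    ext w
    simp only [GAutomaton.Lang, GAutomaton.Accepts, Set.mem_setOf_eq, Set.mem_image]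
    constructor
    · rintro ⟨q, hq, hp⟩
      obtain ⟨l, hev, hw, hg⟩ := bwd hp
      refine ⟨l, ⟨?_, hg⟩, hw⟩
      rw [DFA.mem_accepts]
      exact ⟨q, hq, hev⟩
    · rintro ⟨l, ⟨hR, hprod⟩, rfl⟩
      rw [DFA.mem_accepts] at hR
      obtain ⟨q, hq, hev⟩ := hR
      have := fwd l M.start q hev
      rw [hprod] at this
      exact ⟨q, hq, this⟩
end

section
/- If the word problem of a finitely generated group G is recursively enumerable, then the language accepted by any G-automaton is recursively enumerable. -/
/-- A predicate is recursively enumerable (semidecidable). -/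
def REPred₀ {β : Type} [Primcodable β] (p : β → Prop) : Prop :=
  Partrec fun a => Part.assert (p a) fun _ => Part.some ()

namespace MyRE


variable {β γ : Type} [Primcodable β] [Primcodable γ]

theorem REPred.of_iff {p q : β → Prop} (h : REPred₀ p) (H : ∀ b, p b ↔ q b) : REPred₀ q := by
  have : p = q := funext fun b => propext (H b)
  rwa [this] at h

theorem rePred_of_computable {c : β → Bool} (hc : Computable c) :
    REPred₀ fun b => c b = true := by
  have h : Partrec fun b => Part.ofOption (bif c b then some () else none) :=
    Computable.ofOption (Computable.cond hc (Computable.const (some ())) (Computable.const none))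
  exact Partrec.of_eq h fun b => Part.ext fun u => by
    cases u; by_cases h : c b <;> simp [h, Part.mem_assert_iff]

theorem REPred.and {p q : β → Prop} (hp : REPred₀ p) (hq : REPred₀ q) :
    REPred₀ fun b => p b ∧ q b := by
  have h : Partrec fun b =>
      (Part.assert (p b) fun _ => Part.some ()).bind fun _ =>
        Part.assert (q b) fun _ => Part.some () :=
    hp.bind ((hq.comp Computable.fst).to₂ : Partrec₂ fun (b : β) (_ : Unit) => Part.assert (q b) fun _ => Part.some ())
  exact Partrec.of_eq h fun b => Part.ext fun u => by
    cases u
    simp only [Part.mem_bind_iff, Part.mem_assert_iff, Part.mem_some_iff]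
    tauto

theorem REPred.comp {p : β → Prop} {g : γ → β} (hp : REPred₀ p) (hg : Computable g) :
    REPred₀ fun c => p (g c) :=
  Partrec.comp hp hg

open Nat.Partrec (Code) in
open Nat.Partrec.Code in
theorem REPred.exists_of {q : β → γ → Prop}
    (h : Partrec fun x : β × γ => Part.assert (q x.1 x.2) fun _ => Part.some ()) :
    REPred₀ fun b => ∃ c, q b c := by
  obtain ⟨cd, hcd⟩ := exists_code.1 h
  set F : β × γ →. Unit := fun x => Part.assert (q x.1 x.2) fun _ => Part.some () with hF
  -- dovetailing function
  set g : β → ℕ → Option Unit := fun b n =>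
    (evaln n.unpair.1 cd (Nat.pair (Encodable.encode b) n.unpair.2)).map fun _ => () with hg
  have hgc : Computable₂ g := by
    have h1 : Primrec fun p : β × ℕ =>
        evaln p.2.unpair.1 cd (Nat.pair (Encodable.encode p.1) p.2.unpair.2) :=
      primrec_evaln.comp
        (((Primrec.fst.comp (Primrec.unpair.comp Primrec.snd)).pair (Primrec.const cd)).pair
          (Primrec₂.natPair.comp (Primrec.encode.comp Primrec.fst)
            (Primrec.snd.comp (Primrec.unpair.comp Primrec.snd))))
    have h2 : Primrec fun p : β × ℕ =>
        (evaln p.2.unpair.1 cd (Nat.pair (Encodable.encode p.1) p.2.unpair.2)).map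
          fun _ => () :=
      Primrec.option_map h1 (Primrec.const ()).to₂
    exact h2.to_comp.to₂
  have key : ∀ b, (∃ c, q b c) ↔ ∃ n u, u ∈ g b n := by
    intro b
    constructor
    · rintro ⟨c, hqc⟩
      have h1 : () ∈ F (b, c) := by
        simp [hF, Part.mem_assert_iff, hqc]
      have h2 : Encodable.encode () ∈ eval cd (Encodable.encode (b, c)) := by
        rw [hcd]
        refine Part.mem_bind_iff.2 ⟨(b, c), ?_, ?_⟩
        · simp
        · exact (Part.mem_map_iff _).2 ⟨(), h1, rfl⟩
      rw [evaln_complete] at h2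
      obtain ⟨k, hk⟩ := h2
      refine ⟨Nat.pair k (Encodable.encode c), (), ?_⟩
      simp only [hg, Nat.unpair_pair]
      rw [Encodable.encode_prod_val] at hk
      simp [Option.mem_def.1 hk]
    · rintro ⟨n, u, hu⟩
      simp only [hg, Option.mem_def, Option.map_eq_some_iff] at hu
      obtain ⟨y, hy, -⟩ := hu
      have h2 : y ∈ eval cd (Nat.pair (Encodable.encode b) n.unpair.2) :=
        evaln_sound hy
      rw [hcd] at h2
      obtain ⟨x, hx1, hx2⟩ := Part.mem_bind_iff.1 h2
      -- decode of the pair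
      have hx1' : x ∈ (Encodable.decode (Nat.pair (Encodable.encode b) n.unpair.2) : Option (β × γ)) := Part.mem_coe.1 hx1
      rw [Encodable.decode_prod_val] at hx1'
      simp only [Nat.unpair_pair, Encodable.encodek, Option.bind_some, Option.mem_def,
        Option.map_eq_some_iff] at hx1'
      obtain ⟨c, -, rfl⟩ := hx1'
      obtain ⟨u, hu', -⟩ := (Part.mem_map_iff _).1 hx2
      have := (Part.mem_assert_iff.1 hu').1
      exact ⟨c, this⟩
  have hrf : Partrec fun b => Nat.rfindOpt (g b) := Partrec.rfindOpt hgc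
  refine Partrec.of_eq hrf fun b => Part.ext fun u => ?_
  cases u
  constructor
  · intro hu
    have hd : (Nat.rfindOpt (g b)).Dom := Part.dom_iff_mem.2 ⟨_, hu⟩
    have h3 := Nat.rfindOpt_dom.1 hd
    exact Part.mem_assert_iff.2 ⟨(key b).2 h3, Part.mem_some _⟩
  · intro hu
    have h3 := (key b).1 (Part.mem_assert_iff.1 hu).1
    have hd : (Nat.rfindOpt (g b)).Dom := Nat.rfindOpt_dom.2 h3
    obtain ⟨⟨⟩, ha⟩ := Part.dom_iff_mem.1 hd
    exact ha



section Check

variable {α ι : Type}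

/-- source codes of an index list -/
def srcs (D : List (ℕ × Option α × ι × ℕ)) (d : ℕ × Option α × ι × ℕ) (l : List ℕ) : List ℕ :=
  l.map fun i => (D.getD i d).1

def tgts (D : List (ℕ × Option α × ι × ℕ)) (d : ℕ × Option α × ι × ℕ) (l : List ℕ) : List ℕ :=
  l.map fun i => (D.getD i d).2.2.2

def wordOf (D : List (ℕ × Option α × ι × ℕ)) (d : ℕ × Option α × ι × ℕ) (l : List ℕ) : List α :=
  l.flatMap fun i => ((D.getD i d).2.1).toList

def gwordOf (D : List (ℕ × Option α × ι × ℕ)) (d : ℕ × Option α × ι × ℕ) (l : List ℕ) : List ι :=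
  l.map fun i => (D.getD i d).2.2.1

def lastSt (D : List (ℕ × Option α × ι × ℕ)) (d : ℕ × Option α × ι × ℕ) (s : ℕ)
    (l : List ℕ) : ℕ :=
  (tgts D d l).reverse.getD 0 s

def check [DecidableEq α] (D : List (ℕ × Option α × ι × ℕ)) (d : ℕ × Option α × ι × ℕ)
    (s : ℕ) (acc : List ℕ) (x : List α × List ℕ) : Bool :=
  (x.2.all fun i => decide (i < D.length)) &&
  decide (srcs D d x.2 ++ [lastSt D d s x.2] = s :: tgts D d x.2) &&
  decide (acc.idxOf (lastSt D d s x.2) < acc.length) &&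
  decide (wordOf D d x.2 = x.1)

variable [Primcodable α] [Primcodable ι]

theorem primrec_getD (D : List (ℕ × Option α × ι × ℕ)) (d : ℕ × Option α × ι × ℕ) :
    Primrec fun i : ℕ => D.getD i d :=
  (Primrec.list_getD d).comp (Primrec.const D) Primrec.id

theorem primrec_srcs (D : List (ℕ × Option α × ι × ℕ)) (d : ℕ × Option α × ι × ℕ) :
    Primrec fun l => srcs D d l :=
  Primrec.list_map Primrec.id
    ((Primrec.fst.comp ((primrec_getD D d).comp Primrec.snd)).to₂ :
      Primrec₂ fun (_ : List ℕ) (i : ℕ) => (D.getD i d).1)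

theorem primrec_tgts (D : List (ℕ × Option α × ι × ℕ)) (d : ℕ × Option α × ι × ℕ) :
    Primrec fun l => tgts D d l :=
  Primrec.list_map Primrec.id
    (((Primrec.snd.comp (Primrec.snd.comp Primrec.snd)).comp
        ((primrec_getD D d).comp Primrec.snd)).to₂ :
      Primrec₂ fun (_ : List ℕ) (i : ℕ) => (D.getD i d).2.2.2)

theorem primrec_gwordOf (D : List (ℕ × Option α × ι × ℕ)) (d : ℕ × Option α × ι × ℕ) :
    Primrec fun l => gwordOf D d l :=
  Primrec.list_map Primrec.id
    (((Primrec.fst.comp (Primrec.snd.comp Primrec.snd)).comp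
        ((primrec_getD D d).comp Primrec.snd)).to₂ :
      Primrec₂ fun (_ : List ℕ) (i : ℕ) => (D.getD i d).2.2.1)

theorem primrec_optToList : Primrec fun o : Option α => o.toList := by
  have h : Primrec fun o : Option α => (Option.casesOn o ([] : List α) fun a => [a] : List α) :=
    Primrec.option_casesOn Primrec.id (Primrec.const ([] : List α))
      ((Primrec.list_cons.comp Primrec.snd (Primrec.const ([] : List α))).to₂ :
        Primrec₂ fun (_ : Option α) (a : α) => [a])
  exact h.of_eq fun o => by cases o <;> rfl

theorem primrec_wordOf (D : List (ℕ × Option α × ι × ℕ)) (d : ℕ × Option α × ι × ℕ) :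
    Primrec fun l => wordOf D d l :=
  Primrec.list_flatMap Primrec.id
    ((primrec_optToList.comp
        ((Primrec.fst.comp Primrec.snd).comp ((primrec_getD D d).comp Primrec.snd))).to₂ :
      Primrec₂ fun (_ : List ℕ) (i : ℕ) => ((D.getD i d).2.1).toList)

theorem primrec_lastSt (D : List (ℕ × Option α × ι × ℕ)) (d : ℕ × Option α × ι × ℕ)
    (s : ℕ) : Primrec fun l => lastSt D d s l :=
  (Primrec.list_getD s).comp (Primrec.list_reverse.comp (primrec_tgts D d)) (Primrec.const 0)

theorem primrec_list_all {p : ℕ → Bool} (hp : Primrec p) :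
    Primrec fun l : List ℕ => l.all p := by
  have h : Primrec fun l : List ℕ => l.foldr (fun a b => p a && b) true :=
    Primrec.list_foldr Primrec.id (Primrec.const true)
      ((Primrec.and.comp (hp.comp (Primrec.fst.comp Primrec.snd))
          (Primrec.snd.comp Primrec.snd)).to₂ :
        Primrec₂ fun (_ : List ℕ) (q : ℕ × Bool) => p q.1 && q.2)
  exact h.of_eq fun l => by induction l with
    | nil => rfl
    | cons a l ih => simp [List.all_cons, ih, List.foldr]

theorem primrec_check [DecidableEq α] (D : List (ℕ × Option α × ι × ℕ))
    (d : ℕ × Option α × ι × ℕ) (s : ℕ) (acc : List ℕ) :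
    Primrec fun x : List α × List ℕ => check D d s acc x := by
  have h1 : Primrec fun x : List α × List ℕ => x.2.all fun i => decide (i < D.length) :=
    (primrec_list_all ((Primrec.nat_lt.comp Primrec.id (Primrec.const D.length)).decide)).comp
      Primrec.snd
  have h2 : Primrec fun x : List α × List ℕ =>
      decide (srcs D d x.2 ++ [lastSt D d s x.2] = s :: tgts D d x.2) :=
    (Primrec.eq.comp
      (Primrec.list_append.comp ((primrec_srcs D d).comp Primrec.snd)
        (Primrec.list_cons.comp ((primrec_lastSt D d s).comp Primrec.snd)
          (Primrec.const [])))
      (Primrec.list_cons.comp (Primrec.const s) ((primrec_tgts D d).comp Primrec.snd))).decide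
  have h3 : Primrec fun x : List α × List ℕ =>
      decide (acc.idxOf (lastSt D d s x.2) < acc.length) :=
    (Primrec.nat_lt.comp
      ((Primrec.list_idxOf₁ acc).comp ((primrec_lastSt D d s).comp Primrec.snd))
      (Primrec.const acc.length)).decide
  have h4 : Primrec fun x : List α × List ℕ => decide (wordOf D d x.2 = x.1) :=
    (Primrec.eq.comp ((primrec_wordOf D d).comp Primrec.snd) Primrec.fst).decide
  exact Primrec.and.comp (Primrec.and.comp (Primrec.and.comp h1 h2) h3) h4

end Check



variable {G : Type} [Group G] {α : Type}

theorem path_iff (M : GAutomaton G α) (q q' : M.Q) (w : List α) (g : G) :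
    M.Path q w g q' ↔ ∃ es : List (M.Q × Option α × G × M.Q),
      (∀ e ∈ es, e ∈ M.edges) ∧
      es.map (·.1) ++ [q'] = q :: es.map (·.2.2.2) ∧
      w = es.flatMap (fun e => e.2.1.toList) ∧
      g = (es.map (·.2.2.1)).prod := by
  constructor
  · intro hp
    induction hp with
    | nil q => exact ⟨[], by simp, by simp, by simp, by simp⟩
    | cons he hp ih =>
      obtain ⟨es, hmem, hchain, hw, hg⟩ := ih
      rename_i q q'' q3 x g h w' 
      refine ⟨(q, x, g, q'') :: es, ?_, ?_, ?_, ?_⟩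
      · intro e he'
        rcases List.mem_cons.1 he' with rfl | h'
        · exact he
        · exact hmem _ h'
      · simpa using hchain
      · simp [hw]
      · simp [hg]
  · rintro ⟨es, hmem, hchain, rfl, rfl⟩
    induction es generalizing q with
    | nil =>
      simp only [List.map_nil, List.nil_append, List.cons.injEq, and_true] at hchain
      subst hchain
      simpa using GAutomaton.Path.nil q'
    | cons e es ih =>
      obtain ⟨a, x, g, b⟩ := e
      simp only [List.map_cons, List.cons_append, List.cons.injEq] at hchain
      obtain ⟨rfl, hchain⟩ := hchain
      have hp := ih b (fun e he => hmem e (List.mem_cons_of_mem _ he)) hchain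
      simpa using GAutomaton.Path.cons (hmem _ (List.mem_cons_self)) hp

theorem accepts_iff (M : GAutomaton G α) (w : List α) :
    M.Accepts w ↔ ∃ es : List (M.Q × Option α × G × M.Q),
      (∀ e ∈ es, e ∈ M.edges) ∧
      (∃ q ∈ M.accept, es.map (·.1) ++ [q] = M.start :: es.map (·.2.2.2)) ∧
      w = es.flatMap (fun e => e.2.1.toList) ∧
      ((es.map (·.2.2.1)).prod : G) = 1 := by
  constructor
  · rintro ⟨q, hq, hp⟩
    obtain ⟨es, h1, h2, h3, h4⟩ := (path_iff M _ _ _ _).1 hp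
    exact ⟨es, h1, ⟨q, hq, h2⟩, h3, h4.symm⟩
  · rintro ⟨es, h1, ⟨q, hq, h2⟩, h3, h4⟩
    exact ⟨q, hq, (path_iff M _ _ _ _).2 ⟨es, h1, h2, h3, h4.symm⟩⟩


theorem last_of_chain {A B : List ℕ} {x y : ℕ} (h : A ++ [x] = y :: B) :
    B.reverse.getD 0 y = x := by
  have h' := congrArg List.reverse h
  simp only [List.reverse_append, List.reverse_cons, List.reverse_nil, List.nil_append,
    List.singleton_append] at h'
  -- h' : x :: A.reverse = B.reverse ++ [y]
  cases hB : B.reverse with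
  | nil =>
    rw [hB] at h'
    simp only [List.nil_append, List.cons.injEq] at h'
    simp [h'.1]
  | cons c C =>
    rw [hB] at h'
    simp only [List.cons_append, List.cons.injEq] at h'
    simp [h'.1]

end MyRE


/-- If the word problem of `G` is r.e. then the language of any `G`-automaton is r.e. -/
theorem stmt_6 (G : Type) [Group G] (ι : Type) [Fintype ι] [Primcodable ι] (f : ι → G)
    (hgen : Subgroup.closure (Set.range f) = ⊤)
    (hWP : REPred₀ fun w : List ι => (w.map f).prod = 1)
    (α : Type) [Fintype α] [Primcodable α] (M : GAutomaton G α)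
    (hedges : ∀ e ∈ M.edges, e.2.2.1 ∈ Set.range f) :
    REPred₀ fun w : List α => w ∈ M.Lang := by
  classical
  have hLang : ∀ w : List α, (w ∈ M.Lang) ↔ M.Accepts w := fun w => Iff.rfl
  rcases hE : M.edges with - | ⟨e₀, E'⟩
  · -- no edges: the language is {[]} or ∅
    have hL : ∀ w : List α, M.Accepts w ↔ (M.start ∈ M.accept ∧ w = []) := by
      intro w
      rw [MyRE.accepts_iff]
      constructor
      · rintro ⟨es, h1, ⟨q, hq, h2⟩, rfl, -⟩
        have hes : es = [] := by
          cases es with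
          | nil => rfl
          | cons e es => exact absurd (h1 e (List.mem_cons_self)) (by simp [hE])
        subst hes
        simp only [List.map_nil, List.nil_append, List.cons.injEq, and_true] at h2
        subst h2
        exact ⟨hq, by simp⟩
      · rintro ⟨hs, rfl⟩
        exact ⟨[], by simp, ⟨M.start, hs, by simp⟩, by simp, by simp⟩
    by_cases hs : M.start ∈ M.accept
    · letI : DecidableEq α := Encodable.decidableEqOfEncodable α
      have hc : Computable fun w : List α => decide (w = ([] : List α)) :=
        (Primrec.eq.comp Primrec.id (Primrec.const ([] : List α))).decide.to_comp
      exact MyRE.REPred.of_iff (MyRE.rePred_of_computable hc) fun w => by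
        simp [hLang w, hL w, hs]
    · exact MyRE.REPred.of_iff (MyRE.rePred_of_computable (Computable.const false))
        fun w => by simp [hLang w, hL w, hs]
  · -- main case : there is at least one edge
    have he₀ : e₀ ∈ M.edges := by rw [hE]; exact List.mem_cons_self
    clear hE
    letI : DecidableEq α := Encodable.decidableEqOfEncodable α
    letI := M.fintypeQ
    letI instDQ : DecidableEq (M.Q × Option α × G × M.Q) := Classical.decEq _
    letI instBQ : BEq (M.Q × Option α × G × M.Q) := instBEqOfDecidableEq
    set enc : M.Q → ℕ := fun q => ((Fintype.equivFin M.Q) q : ℕ) with henc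
    have encInj : Function.Injective enc := fun a b h =>
      (Fintype.equivFin M.Q).injective (Fin.val_injective h)
    have hch : ∀ e ∈ M.edges, ∃ i : ι, f i = e.2.2.1 := fun e he => hedges e he
    choose ch hchs using hch
    set d : ℕ × Option α × ι × ℕ := (0, none, ch e₀ he₀, 0) with hd
    set D : List (ℕ × Option α × ι × ℕ) :=
      M.edges.attach.map (fun e => (enc e.1.1, e.1.2.1, ch e.1 e.2, enc e.1.2.2.2)) with hD
    have hDlen : D.length = M.edges.length := by simp [hD]
    have hDget : ∀ (i : ℕ) (h : i < M.edges.length),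
        (D.getD i d).1 = enc (M.edges[i]).1 ∧ (D.getD i d).2.1 = (M.edges[i]).2.1 ∧
        f ((D.getD i d).2.2.1) = (M.edges[i]).2.2.1 ∧
        (D.getD i d).2.2.2 = enc (M.edges[i]).2.2.2 := by
      intro i h
      have hi : i < D.length := by rw [hDlen]; exact h
      rw [List.getD_eq_getElem _ _ hi]
      simp only [hD, List.getElem_map, List.getElem_attach]
      refine ⟨?_, ?_, ?_, ?_⟩ <;> first | trivial | exact hchs _ _
    set acceptL : List ℕ :=
      ((Finset.univ : Finset M.Q).filter (fun q => q ∈ M.accept)).toList.map enc with hacc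
    have haccMem : ∀ x : ℕ, x ∈ acceptL ↔ ∃ q ∈ M.accept, enc q = x := by
      intro x
      simp [hacc, List.mem_map, Finset.mem_toList, Finset.mem_filter]
    set s : ℕ := enc M.start with hs
    have main : ∀ w : List α, M.Accepts w ↔
        ∃ l : List ℕ, MyRE.check D d s acceptL (w, l) = true ∧
          ((MyRE.gwordOf D d l).map f).prod = 1 := by
      intro w
      rw [MyRE.accepts_iff]
      constructor
      · rintro ⟨es, h1, ⟨q, hq, h2⟩, rfl, h4⟩
        refine ⟨es.map fun e => M.edges.idxOf e, ?_⟩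
        have hidx : ∀ e ∈ es, M.edges.idxOf e < M.edges.length := fun e he =>
          List.idxOf_lt_length_iff.2 (h1 e he)
        have hidxget : ∀ e (he : e ∈ es), M.edges[M.edges.idxOf e]'(hidx e he) = e :=
          fun e he => List.getElem_idxOf (hidx e he)
        set l : List ℕ := es.map fun e => M.edges.idxOf e with hl
        have hsrcs : MyRE.srcs D d l = es.map fun e => enc e.1 := by
          simp only [MyRE.srcs, hl, List.map_map]
          refine List.map_congr_left fun e he => ?_
          have h := (hDget _ (hidx e he)).1
          simp only [Function.comp_apply, h, hidxget e he]
        have htgts : MyRE.tgts D d l = es.map fun e => enc e.2.2.2 := by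
          simp only [MyRE.tgts, hl, List.map_map]
          refine List.map_congr_left fun e he => ?_
          have h := (hDget _ (hidx e he)).2.2.2
          simp only [Function.comp_apply, h, hidxget e he]
        have hgwf : (MyRE.gwordOf D d l).map f = es.map fun e => e.2.2.1 := by
          simp only [MyRE.gwordOf, hl, List.map_map]
          refine List.map_congr_left fun e he => ?_
          have h := (hDget _ (hidx e he)).2.2.1
          simp only [Function.comp_apply, h, hidxget e he]
        have hwordeq : MyRE.wordOf D d l =
            es.flatMap fun e => e.2.1.toList := by
          simp only [MyRE.wordOf, hl, List.flatMap_def, List.map_map]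
          congr 1
          refine List.map_congr_left fun e he => ?_
          have h := (hDget _ (hidx e he)).2.1
          simp only [Function.comp_apply, h, hidxget e he]
        have h2' := congrArg (List.map enc) h2
        simp only [List.map_append, List.map_map, List.map_cons, List.map_nil,
          Function.comp_def] at h2'
        have hchain : MyRE.srcs D d l ++ [enc q] = s :: MyRE.tgts D d l := by
          rw [hsrcs, htgts, hs]
          exact h2'
        have hlast : MyRE.lastSt D d s l = enc q := MyRE.last_of_chain hchain
        refine ⟨?_, ?_⟩
        · simp only [MyRE.check, Bool.and_eq_true, List.all_eq_true, decide_eq_true_eq]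
          refine ⟨⟨⟨?_, ?_⟩, ?_⟩, ?_⟩
          · intro i hi
            obtain ⟨e, he, rfl⟩ := List.mem_map.1 hi
            rw [hDlen]
            exact hidx e he
          · rw [hlast]
            exact hchain
          · rw [hlast]
            exact List.idxOf_lt_length_iff.2 ((haccMem _).2 ⟨q, hq, rfl⟩)
          · exact hwordeq
        · rw [hgwf]
          exact h4
      · rintro ⟨l, hcheck, hgrp⟩
        simp only [MyRE.check, Bool.and_eq_true, List.all_eq_true, decide_eq_true_eq]
          at hcheck
        obtain ⟨⟨⟨hall, hchain⟩, haccd⟩, hword⟩ := hcheck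
        have hlt : ∀ i ∈ l, i < M.edges.length := fun i hi => by
          have := hall i hi; rwa [hDlen] at this
        set es : List (M.Q × Option α × G × M.Q) :=
          l.map (fun i => M.edges.getD i e₀) with hes
        have hget : ∀ i (hi : i ∈ l), M.edges.getD i e₀ = M.edges[i]'(hlt i hi) := fun i hi =>
          List.getD_eq_getElem _ _ (hlt i hi)
        have h1 : ∀ e ∈ es, e ∈ M.edges := by
          rintro e he
          obtain ⟨i, hi, rfl⟩ := List.mem_map.1 he
          rw [hget i hi]
          exact List.getElem_mem _
        have hsrcs : MyRE.srcs D d l = es.map fun e => enc e.1 := by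
          simp only [MyRE.srcs, hes, List.map_map]
          refine List.map_congr_left fun i hi => ?_
          have h := (hDget _ (hlt i hi)).1
          simp only [Function.comp_apply, h, hget i hi]
        have htgts : MyRE.tgts D d l = es.map fun e => enc e.2.2.2 := by
          simp only [MyRE.tgts, hes, List.map_map]
          refine List.map_congr_left fun i hi => ?_
          have h := (hDget _ (hlt i hi)).2.2.2
          simp only [Function.comp_apply, h, hget i hi]
        have hgwf : (MyRE.gwordOf D d l).map f = es.map fun e => e.2.2.1 := by
          simp only [MyRE.gwordOf, hes, List.map_map]
          refine List.map_congr_left fun i hi => ?_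
          have h := (hDget _ (hlt i hi)).2.2.1
          simp only [Function.comp_apply, h, hget i hi]
        have hwordeq : MyRE.wordOf D d l = es.flatMap fun e => e.2.1.toList := by
          simp only [MyRE.wordOf, hes, List.flatMap_def, List.map_map]
          congr 1
          refine List.map_congr_left fun i hi => ?_
          have h := (hDget _ (hlt i hi)).2.1
          simp only [Function.comp_apply, h, hget i hi]
        have hmemacc : MyRE.lastSt D d s l ∈ acceptL := List.idxOf_lt_length_iff.1 haccd
        obtain ⟨q, hq, hencq⟩ := (haccMem _).1 hmemacc
        have hchainQ : es.map (fun e => e.1) ++ [q] = M.start :: es.map fun e => e.2.2.2 := by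
          apply List.map_injective_iff.2 encInj
          simp only [List.map_append, List.map_map, List.map_cons, List.map_nil,
            Function.comp_def]
          calc (es.map fun e => enc e.1) ++ [enc q]
              = MyRE.srcs D d l ++ [MyRE.lastSt D d s l] := by rw [hsrcs, hencq]
            _ = s :: MyRE.tgts D d l := hchain
            _ = enc M.start :: es.map fun e => enc e.2.2.2 := by rw [htgts, hs]
        refine ⟨es, h1, ⟨q, hq, hchainQ⟩, ?_, ?_⟩
        · rw [← hword, hwordeq]
        · rw [← hgwf]
          exact hgrp
    have hA : REPred₀ fun x : List α × List ℕ => MyRE.check D d s acceptL x = true :=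
      MyRE.rePred_of_computable (MyRE.primrec_check D d s acceptL).to_comp
    have hB : REPred₀ fun x : List α × List ℕ =>
        ((MyRE.gwordOf D d x.2).map f).prod = 1 :=
      MyRE.REPred.comp hWP ((MyRE.primrec_gwordOf D d).to_comp.comp Computable.snd)
    have hAB := MyRE.REPred.and hA hB
    have hfin : REPred₀ fun w : List α => ∃ l : List ℕ,
        MyRE.check D d s acceptL (w, l) = true ∧
          ((MyRE.gwordOf D d l).map f).prod = 1 :=
      MyRE.REPred.exists_of (q := fun (w : List α) (l : List ℕ) =>
        MyRE.check D d s acceptL (w, l) = true ∧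
          ((MyRE.gwordOf D d l).map f).prod = 1) hAB
    exact MyRE.REPred.of_iff hfin fun w => ((hLang w).trans (main w)).symm
end
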